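/- Let M be a pointed metric space such that the pair (M, ℝ) has the Lip-BPB property and let K be a compact Hausdorff topological space. Then the pair (M, C(K, ℝ)) has the Lip-BPB property for Lipschitz compact maps, where C(K, ℝ) is the Banach space of real-valued continuous functions on K with the supremum norm. -/

import Mathlib

/-!
Pick `t₀ ∈ K` at which `F p - F q` nearly attains its norm and apply the scalar property to the
normalised evaluation `x ↦ F x t₀`; this gives `g : M → ℝ` attaining its norm at `(r, s)`.
The new map is `G x = u · g x + (1 - u) · F x` for a bump `u` with `u t₀ = 1`: it attains its
norm at `(r, s)` through the coordinate `t₀`. Relative compactness of the Lipschitz image of `F`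
makes the difference quotients of `F` equicontinuous at `t₀`, so on the support of `u` they stay
close to their value at `t₀`, which is close to the corresponding quotient of `g`; hence `G - F`
has small Lipschitz norm.
-/

open Set Metric NNReal MeasureTheory

/-- A Lipschitz map vanishing at the base point `z`, i.e. an element of `Lip₀(M,Y)`. -/
def IsLip0 {M Y : Type*} [MetricSpace M] [NormedAddCommGroup Y]
    (z : M) (F : M → Y) : Prop :=
  (∃ K : ℝ≥0, LipschitzWith K F) ∧ F z = 0

/-- The Lipschitz norm `‖F‖_L = sup {‖F p - F q‖ / d(p,q) : p ≠ q}`. -/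
noncomputable def lipNorm {M Y : Type*} [MetricSpace M] [NormedAddCommGroup Y]
    (F : M → Y) : ℝ :=
  sSup {r : ℝ | ∃ p q : M, p ≠ q ∧ r = ‖F p - F q‖ / dist p q}

/-- `F` strongly attains its norm. -/
def StronglyAttains {M Y : Type*} [MetricSpace M] [NormedAddCommGroup Y]
    (F : M → Y) : Prop :=
  ∃ p q : M, p ≠ q ∧ ‖F p - F q‖ = lipNorm F * dist p q

/-- `F` is Lipschitz compact: its Lipschitz image is relatively compact. -/
def IsLipCompact {M Y : Type*} [MetricSpace M] [NormedAddCommGroup Y] [NormedSpace ℝ Y]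
    (F : M → Y) : Prop :=
  IsCompact (closure {y : Y | ∃ p q : M, p ≠ q ∧ y = (dist p q)⁻¹ • (F p - F q)})

/-- The pair `(M,Y)` has the Lip-BPB property witnessed by the function `η`. -/
def LipBPBWith (M : Type*) [MetricSpace M] (z : M)
    (Y : Type*) [NormedAddCommGroup Y] (η : ℝ → ℝ) : Prop :=
  (∀ ε > 0, η ε > 0) ∧
  ∀ ε > 0, ∀ F : M → Y, IsLip0 z F → lipNorm F = 1 →
    ∀ p q : M, p ≠ q → ‖F p - F q‖ > (1 - η ε) * dist p q →
      ∃ G : M → Y, IsLip0 z G ∧ ∃ r s : M, r ≠ s ∧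
        ‖G r - G s‖ = dist r s ∧ lipNorm G = 1 ∧
        lipNorm (fun x => G x - F x) < ε ∧
        (dist p r + dist q s) / dist p q < ε

/-- The pair `(M,Y)` has the Lip-BPB property. -/
def LipBPB (M : Type*) [MetricSpace M] (z : M)
    (Y : Type*) [NormedAddCommGroup Y] : Prop :=
  ∃ η : ℝ → ℝ, LipBPBWith M z Y η

/-- The pair `(M,Y)` has the Lip-BPB property for Lipschitz compact maps
witnessed by the function `η`. -/
def LipBPBCompactWith (M : Type*) [MetricSpace M] (z : M)
    (Y : Type*) [NormedAddCommGroup Y] [NormedSpace ℝ Y] (η : ℝ → ℝ) : Prop :=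
  (∀ ε > 0, η ε > 0) ∧
  ∀ ε > 0, ∀ F : M → Y, IsLip0 z F → IsLipCompact F → lipNorm F = 1 →
    ∀ p q : M, p ≠ q → ‖F p - F q‖ > (1 - η ε) * dist p q →
      ∃ G : M → Y, IsLip0 z G ∧ IsLipCompact G ∧ ∃ r s : M, r ≠ s ∧
        ‖G r - G s‖ = dist r s ∧ lipNorm G = 1 ∧
        lipNorm (fun x => G x - F x) < ε ∧
        (dist p r + dist q s) / dist p q < ε

/-- The pair `(M,Y)` has the Lip-BPB property for Lipschitz compact maps. -/
def LipBPBCompact (M : Type*) [MetricSpace M] (z : M)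
    (Y : Type*) [NormedAddCommGroup Y] [NormedSpace ℝ Y] : Prop :=
  ∃ η : ℝ → ℝ, LipBPBCompactWith M z Y η

/-- `SA(M,Y)` is dense in `Lip₀(M,Y)`. -/
def SADense (M : Type*) [MetricSpace M] (z : M)
    (Y : Type*) [NormedAddCommGroup Y] : Prop :=
  ∀ F : M → Y, IsLip0 z F → ∀ ε > 0,
    ∃ G : M → Y, IsLip0 z G ∧ StronglyAttains G ∧ lipNorm (fun x => G x - F x) < ε

/-- `SA_K(M,Y)` is dense in `Lipc(M,Y)`. -/
def SAKDense (M : Type*) [MetricSpace M] (z : M)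
    (Y : Type*) [NormedAddCommGroup Y] [NormedSpace ℝ Y] : Prop :=
  ∀ F : M → Y, IsLip0 z F → IsLipCompact F → ∀ ε > 0,
    ∃ G : M → Y, IsLip0 z G ∧ IsLipCompact G ∧ StronglyAttains G ∧
      lipNorm (fun x => G x - F x) < ε

section LipNorm

variable {M Y : Type*} [MetricSpace M] [NormedAddCommGroup Y] {F G : M → Y} {L L' : ℝ≥0}

theorem lipNorm_nonneg (F : M → Y) : 0 ≤ lipNorm F :=
  Real.sSup_nonneg (by rintro r ⟨p, q, -, rfl⟩; positivity)

theorem lipNorm_le_of_forall {C : ℝ} (hC : 0 ≤ C)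
    (h : ∀ p q : M, ‖F p - F q‖ ≤ C * dist p q) : lipNorm F ≤ C :=
  Real.sSup_le (by rintro r ⟨p, q, -, rfl⟩; exact div_le_of_le_mul₀ dist_nonneg hC (h p q)) hC

theorem LipschitzWith.lipNorm_le (hF : LipschitzWith L F) : lipNorm F ≤ L :=
  lipNorm_le_of_forall L.2 fun p q => by simpa only [dist_eq_norm] using hF.dist_le_mul p q

theorem LipschitzWith.norm_sub_le_lipNorm_mul (hF : LipschitzWith L F) (p q : M) :
    ‖F p - F q‖ ≤ lipNorm F * dist p q := by
  rcases eq_or_ne p q with rfl | hpq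
  · simp
  have hbdd : BddAbove {r : ℝ | ∃ p q : M, p ≠ q ∧ r = ‖F p - F q‖ / dist p q} := by
    refine ⟨L, ?_⟩
    rintro r ⟨p, q, -, rfl⟩
    exact div_le_of_le_mul₀ dist_nonneg L.2
      (by simpa only [dist_eq_norm] using hF.dist_le_mul p q)
  exact (div_le_iff₀ (dist_pos.2 hpq)).1 (le_csSup hbdd ⟨p, q, hpq, rfl⟩)

theorem LipschitzWith.of_lipNorm_le (hF : LipschitzWith L F) (h : lipNorm F ≤ L') :
    LipschitzWith L' F :=
  LipschitzWith.of_dist_le_mul fun p q => by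
    simpa only [dist_eq_norm] using
      (hF.norm_sub_le_lipNorm_mul p q).trans (mul_le_mul_of_nonneg_right h dist_nonneg)

theorem LipschitzWith.lipNorm_eq {p q : M} (hF : LipschitzWith L F) (hpq : p ≠ q)
    (h : ‖F p - F q‖ = L * dist p q) : lipNorm F = L := by
  refine le_antisymm hF.lipNorm_le (le_of_mul_le_mul_right ?_ (dist_pos.2 hpq))
  exact h ▸ hF.norm_sub_le_lipNorm_mul p q

theorem lipNorm_add_le (hF : LipschitzWith L F) (hG : LipschitzWith L' G) :
    lipNorm (fun x => F x + G x) ≤ lipNorm F + lipNorm G :=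
  lipNorm_le_of_forall (add_nonneg (lipNorm_nonneg F) (lipNorm_nonneg G)) fun p q =>
    calc ‖F p + G p - (F q + G q)‖ = ‖(F p - F q) + (G p - G q)‖ := by rw [add_sub_add_comm]
      _ ≤ ‖F p - F q‖ + ‖G p - G q‖ := norm_add_le _ _
      _ ≤ (lipNorm F + lipNorm G) * dist p q := by
        rw [add_mul]
        exact add_le_add (hF.norm_sub_le_lipNorm_mul p q) (hG.norm_sub_le_lipNorm_mul p q)

theorem lipNorm_const_smul {𝕜 : Type*} [NormedField 𝕜] [NormedSpace 𝕜 Y] (c : 𝕜)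
    (F : M → Y) :
    lipNorm (fun x => c • F x) = ‖c‖ * lipNorm F := by
  rw [lipNorm, lipNorm, ← smul_eq_mul, ← Real.sSup_smul_of_nonneg (norm_nonneg c)]
  congr 1
  ext r
  simp only [Set.mem_ofPred_eq, Set.mem_smul_set, smul_eq_mul, ← smul_sub, norm_smul,
    mul_div_assoc]
  constructor
  · rintro ⟨p, q, hpq, rfl⟩
    exact ⟨_, ⟨p, q, hpq, rfl⟩, rfl⟩
  · rintro ⟨_, ⟨p, q, hpq, rfl⟩, rfl⟩
    exact ⟨p, q, hpq, rfl⟩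

end LipNorm

section LipCompact

variable {M Y Z : Type*} [MetricSpace M] [NormedAddCommGroup Y] [NormedSpace ℝ Y]
  [NormedAddCommGroup Z] [NormedSpace ℝ Z] {F G : M → Y}

def lipImage (F : M → Y) : Set Y :=
  {y : Y | ∃ p q : M, p ≠ q ∧ y = (dist p q)⁻¹ • (F p - F q)}

theorem LipschitzWith.isLipCompact [ProperSpace Y] {L : ℝ≥0} (hF : LipschitzWith L F) :
    IsLipCompact F := by
  refine (isCompact_closedBall (0 : Y) L).closure_of_subset ?_
  rintro _ ⟨p, q, hpq, rfl⟩
  rw [mem_closedBall_zero_iff, norm_smul, norm_inv, Real.norm_of_nonneg dist_nonneg,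
    inv_mul_le_iff₀ (dist_pos.2 hpq), ← dist_eq_norm, mul_comm]
  exact hF.dist_le_mul p q

theorem IsLipCompact.add (hF : IsLipCompact F) (hG : IsLipCompact G) :
    IsLipCompact (fun x => F x + G x) := by
  refine (IsCompact.add hF hG).closure_of_subset ?_
  rintro _ ⟨p, q, hpq, rfl⟩
  refine ⟨_, subset_closure (s := lipImage F) ⟨p, q, hpq, rfl⟩,
    _, subset_closure (s := lipImage G) ⟨p, q, hpq, rfl⟩, ?_⟩
  simp only [← smul_add, add_sub_add_comm]

theorem IsLipCompact.continuousLinearMap_comp (T : Y →L[ℝ] Z) (hF : IsLipCompact F) :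
    IsLipCompact (fun x => T (F x)) := by
  refine (hF.image T.continuous).closure_of_subset ?_
  rintro _ ⟨p, q, hpq, rfl⟩
  exact ⟨_, subset_closure (s := lipImage F) ⟨p, q, hpq, rfl⟩, by rw [map_smul, map_sub]⟩

end LipCompact

theorem LipschitzWith.continuousMap_apply {M K E : Type*} [MetricSpace M] [TopologicalSpace K]
    [CompactSpace K] [MetricSpace E] {L : ℝ≥0} {F : M → C(K, E)} (hF : LipschitzWith L F)
    (t : K) : LipschitzWith L fun x => F x t :=
  LipschitzWith.of_dist_le_mul fun x y =>
    (ContinuousMap.dist_apply_le_dist t).trans (hF.dist_le_mul x y)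

theorem ContinuousMap.exists_lt_norm_apply {K E : Type*} [TopologicalSpace K] [CompactSpace K]
    [NormedAddCommGroup E] {f : C(K, E)} {c : ℝ} (hc : 0 ≤ c) (hf : c < ‖f‖) :
    ∃ t, c < ‖f t‖ := by
  by_contra! h
  exact hf.not_ge ((f.norm_le hc).2 h)

theorem IsCompact.exists_bump_mul_abs_sub_apply_le {K : Type*} [TopologicalSpace K] [CompactSpace K]
    {S : Set C(K, ℝ)} (hS : IsCompact S) (t₀ : K) {δ : ℝ} (hδ : 0 < δ) :
    ∃ u : C(K, ℝ), u t₀ = 1 ∧ (∀ t, u t ∈ Icc (0 : ℝ) 1) ∧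
      ∀ v ∈ S, ∀ t, u t * |v t - v t₀| ≤ δ := by
  have := isCompact_iff_compactSpace.mp hS
  -- `D t = sup_{v ∈ S} |v t - v t₀|`, continuous in `t` because `S` is compact
  let ev : C(K, C(S, ℝ)) :=
    ContinuousMap.curry ⟨fun x : K × S => (x.2 : C(K, ℝ)) x.1, by fun_prop⟩
  let D : K → ℝ := fun t => ‖ev t - ev t₀‖
  have hD : ∀ v ∈ S, ∀ t, |v t - v t₀| ≤ D t := fun v hv t =>
    (ev t - ev t₀).norm_coe_le_norm ⟨v, hv⟩
  refine ⟨⟨fun t => max 0 (1 - D t / δ), by fun_prop⟩, by simp [D], fun t => ?_,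
    fun v hv t => ?_⟩
  · have := norm_nonneg (ev t - ev t₀)
    exact ⟨le_max_left _ _, max_le zero_le_one (sub_le_self _ (by positivity))⟩
  · have hD0 : 0 ≤ D t := norm_nonneg _
    calc max 0 (1 - D t / δ) * |v t - v t₀| ≤ max 0 (1 - D t / δ) * D t :=
          mul_le_mul_of_nonneg_left (hD v hv t) (le_max_left _ _)
      _ ≤ δ := by
        rcases le_total (D t) δ with h | h
        · exact (mul_le_of_le_one_left hD0
            (max_le zero_le_one (sub_le_self _ (by positivity)))).trans h
        · rw [max_eq_left (by rw [sub_nonpos, one_le_div hδ]; exact h), zero_mul]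
          exact hδ.le

section Blend

variable {M K : Type*} [TopologicalSpace K] {g : M → ℝ} {u : C(K, ℝ)} {F : M → C(K, ℝ)}

def blend (g : M → ℝ) (u : C(K, ℝ)) (F : M → C(K, ℝ)) (x : M) : C(K, ℝ) :=
  g x • u + (1 - u) * F x

@[simp]
theorem blend_apply (x : M) (t : K) : blend g u F x t = u t * g x + (1 - u t) * F x t := by
  simp [blend, mul_comm]

theorem lipschitzWith_blend [MetricSpace M] [CompactSpace K] {L : ℝ≥0}
    (hu : ∀ t, u t ∈ Icc (0 : ℝ) 1) (hg : LipschitzWith L g) (hF : LipschitzWith L F) :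
    LipschitzWith L (blend g u F) := by
  refine LipschitzWith.of_dist_le_mul fun x y =>
    (ContinuousMap.dist_le (by positivity)).2 fun t => ?_
  obtain ⟨hu0, hu1⟩ := hu t
  have hgt : |g x - g y| ≤ L * dist x y := by simpa [Real.dist_eq] using hg.dist_le_mul x y
  have hFt : |F x t - F y t| ≤ L * dist x y := by
    simpa [Real.dist_eq] using (hF.continuousMap_apply t).dist_le_mul x y
  calc dist (blend g u F x t) (blend g u F y t)
      = |u t * (g x - g y) + (1 - u t) * (F x t - F y t)| := by
        simp only [blend_apply, Real.dist_eq]; ring_nf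
    _ ≤ u t * |g x - g y| + (1 - u t) * |F x t - F y t| := by
        refine (abs_add_le _ _).trans_eq ?_
        rw [abs_mul, abs_mul, abs_of_nonneg hu0, abs_of_nonneg (sub_nonneg.2 hu1)]
    _ ≤ u t * (L * dist x y) + (1 - u t) * (L * dist x y) := by gcongr
    _ = L * dist x y := by ring

theorem norm_blend_sub_blend_eq [MetricSpace M] [CompactSpace K] {t₀ : K} {r s : M}
    (hG : LipschitzWith 1 (blend g u F)) (hu : u t₀ = 1) (hg : ‖g r - g s‖ = dist r s) :
    ‖blend g u F r - blend g u F s‖ = dist r s := by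
  refine le_antisymm (by simpa [dist_eq_norm] using hG.dist_le_mul r s) ?_
  simpa [hu, ← hg] using (blend g u F r - blend g u F s).norm_coe_le_norm t₀

theorem isLipCompact_blend [MetricSpace M] [CompactSpace K] {L : ℝ≥0} (hg : LipschitzWith L g)
    (hF : IsLipCompact F) :
    IsLipCompact (blend g u F) :=
  (hg.isLipCompact.continuousLinearMap_comp (ContinuousLinearMap.toSpanSingleton ℝ u)).add
    (hF.continuousLinearMap_comp (ContinuousLinearMap.mul ℝ C(K, ℝ) (1 - u)))

theorem lipNorm_blend_sub_le [MetricSpace M] [CompactSpace K] {t₀ : K} {a δ : ℝ}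
    {Lg LF : ℝ≥0} (hg : LipschitzWith Lg g) (hF : LipschitzWith LF F)
    (hu : ∀ t, u t ∈ Icc (0 : ℝ) 1) (hgF : lipNorm (fun x => g x - F x t₀) ≤ a)
    (hδ : 0 ≤ δ) (huF : ∀ v ∈ lipImage F, ∀ t, u t * |v t - v t₀| ≤ δ) :
    lipNorm (fun x => blend g u F x - F x) ≤ a + δ := by
  have ha := (lipNorm_nonneg _).trans hgF
  have hgFt : ∀ x y, |(g x - F x t₀) - (g y - F y t₀)| ≤ a * dist x y := fun x y =>
    ((hg.sub (hF.continuousMap_apply t₀)).norm_sub_le_lipNorm_mul x y).trans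
      (mul_le_mul_of_nonneg_right hgF dist_nonneg)
  refine lipNorm_le_of_forall (add_nonneg ha hδ) fun x y => ?_
  rcases eq_or_ne x y with rfl | hxy
  · simp
  have hd := dist_pos.2 hxy
  refine (ContinuousMap.norm_le _ (by positivity)).2 fun t => ?_
  obtain ⟨hu0, hu1⟩ := hu t
  have hFt : u t * |(F x t - F y t) - (F x t₀ - F y t₀)| ≤ δ * dist x y := by
    have := huF _ ⟨x, y, hxy, rfl⟩ t
    simp only [ContinuousMap.smul_apply, ContinuousMap.sub_apply, smul_eq_mul, ← mul_sub,
      abs_mul, abs_inv, abs_of_pos hd] at this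
    rwa [mul_left_comm, inv_mul_le_iff₀ hd, mul_comm _ δ] at this
  calc ‖(blend g u F x - F x - (blend g u F y - F y)) t‖
      = u t * |((g x - F x t₀) - (g y - F y t₀))
          - ((F x t - F y t) - (F x t₀ - F y t₀))| := by
        simp only [ContinuousMap.sub_apply, blend_apply, Real.norm_eq_abs]
        rw [← abs_of_nonneg hu0, ← abs_mul, abs_of_nonneg hu0]
        ring_nf
    _ ≤ u t * |(g x - F x t₀) - (g y - F y t₀)|
          + u t * |(F x t - F y t) - (F x t₀ - F y t₀)| := by
        rw [← mul_add]
        exact mul_le_mul_of_nonneg_left (abs_sub _ _) hu0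
    _ ≤ 1 * (a * dist x y) + δ * dist x y := by gcongr; exact hgFt x y
    _ = (a + δ) * dist x y := by ring

end Blend

theorem LipBPBWith.exists_of_lipNorm_le_one {M Y : Type*} [MetricSpace M] [NormedAddCommGroup Y]
    [NormedSpace ℝ Y] {z : M} {η : ℝ → ℝ} (hη : LipBPBWith M z Y η) {ε δ : ℝ}
    (hε : 0 < ε) (hδη : δ ≤ η ε) (hδ1 : δ ≤ 1) {h : M → Y} (hh : IsLip0 z h)
    (hh1 : lipNorm h ≤ 1) {p q : M} (hpq : p ≠ q)
    (hhpq : (1 - δ) * dist p q < ‖h p - h q‖) :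
    ∃ g : M → Y, IsLip0 z g ∧ ∃ r s : M, r ≠ s ∧ ‖g r - g s‖ = dist r s ∧
      lipNorm g = 1 ∧ lipNorm (fun x => g x - h x) < ε + δ ∧
      (dist p r + dist q s) / dist p q < ε := by
  obtain ⟨⟨Lh, hLh⟩, hhz⟩ := hh
  set L := lipNorm h
  have hd := dist_pos.2 hpq
  have hL : 1 - δ < L :=
    lt_of_mul_lt_mul_right (hhpq.trans_le (hLh.norm_sub_le_lipNorm_mul p q)) hd.le
  have hL0 : 0 < L := by linarith
  have hf : LipschitzWith (‖L⁻¹‖₊ * Lh) (fun x => L⁻¹ • h x) :=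
    (lipschitzWith_smul L⁻¹).comp hLh
  have hf1 : lipNorm (fun x => L⁻¹ • h x) = 1 := by
    rw [lipNorm_const_smul, Real.norm_of_nonneg (by positivity), inv_mul_cancel₀ hL0.ne']
  have hfpq : ‖L⁻¹ • h p - L⁻¹ • h q‖ > (1 - η ε) * dist p q := by
    rw [← smul_sub, norm_smul, Real.norm_of_nonneg (by positivity)]
    calc (1 - η ε) * dist p q ≤ (1 - δ) * dist p q := by gcongr
      _ < ‖h p - h q‖ := hhpq
      _ ≤ L⁻¹ * ‖h p - h q‖ :=
        le_mul_of_one_le_left (norm_nonneg _) ((one_le_inv₀ hL0).2 hh1)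
  obtain ⟨g, ⟨⟨Lg, hLg⟩, hgz⟩, r, s, hrs, hgrs, hg1, hgf, hprqs⟩ :=
    hη.2 ε hε _ ⟨⟨_, hf⟩, by simp [hhz]⟩ hf1 p q hpq hfpq
  have hfh : lipNorm (fun x => L⁻¹ • h x - h x) = 1 - L := by
    have : (fun x => L⁻¹ • h x - h x) = fun x => (L⁻¹ - 1) • h x := by
      funext x; rw [sub_smul, one_smul]
    rw [this, lipNorm_const_smul, Real.norm_of_nonneg (sub_nonneg.2 ((one_le_inv₀ hL0).2 hh1))]
    change (L⁻¹ - 1) * L = 1 - L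
    rw [sub_mul, inv_mul_cancel₀ hL0.ne', one_mul]
  refine ⟨g, ⟨⟨Lg, hLg⟩, hgz⟩, r, s, hrs, hgrs, hg1, ?_, hprqs⟩
  calc lipNorm (fun x => g x - h x)
      = lipNorm (fun x => (g x - L⁻¹ • h x) + (L⁻¹ • h x - h x)) := by
        simp_rw [sub_add_sub_cancel]
    _ ≤ lipNorm (fun x => g x - L⁻¹ • h x) + lipNorm (fun x => L⁻¹ • h x - h x) :=
        lipNorm_add_le (hLg.sub hf) (hf.sub hLh)
    _ < ε + δ := by linarith

theorem lipBPBCompact_continuousMap_real_general {M : Type*} [MetricSpace M]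
    (z : M) (hM : LipBPB M z ℝ)
    (K : Type*) [TopologicalSpace K] [CompactSpace K] :
    LipBPBCompact M z C(K, ℝ) := by
  obtain ⟨η, hη⟩ := hM
  refine ⟨fun ε => min (η (ε / 4)) (min (ε / 4) 1),
    fun ε hε => lt_min (hη.1 _ (by positivity)) (lt_min (by positivity) one_pos), ?_⟩
  intro ε hε F ⟨⟨LF, hLF⟩, hFz⟩ hFc hF1 p q hpq hFpq
  set δ := min (η (ε / 4)) (min (ε / 4) 1)
  have hδε : δ ≤ ε / 4 := (min_le_right _ _).trans (min_le_left _ _)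
  have hδ1 : δ ≤ 1 := (min_le_right _ _).trans (min_le_right _ _)
  have hF : LipschitzWith 1 F := hLF.of_lipNorm_le hF1.le
  obtain ⟨t₀, ht₀⟩ :=
    ContinuousMap.exists_lt_norm_apply (mul_nonneg (sub_nonneg.2 hδ1) dist_nonneg) hFpq
  have hev := hF.continuousMap_apply t₀
  obtain ⟨g, ⟨⟨Lg, hLg⟩, hgz⟩, r, s, hrs, hgrs, hg1, hgF, hprqs⟩ :=
    hη.exists_of_lipNorm_le_one (by positivity) (min_le_left _ _) hδ1
      ⟨⟨1, hev⟩, by simp [hFz]⟩ (by simpa using hev.lipNorm_le) hpq ht₀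
  obtain ⟨u, hut₀, hu, huF⟩ :=
    hFc.exists_bump_mul_abs_sub_apply_le t₀ (by positivity : 0 < ε / 4)
  have hG := lipschitzWith_blend hu (hLg.of_lipNorm_le (L' := 1) hg1.le) hF
  have hGrs := norm_blend_sub_blend_eq hG hut₀ hgrs
  refine ⟨blend g u F, ⟨⟨1, hG⟩, by ext; simp [hgz, hFz]⟩, isLipCompact_blend hLg hFc,
    r, s, hrs, hGrs, hG.lipNorm_eq hrs (by simpa using hGrs), ?_, hprqs.trans (by linarith)⟩
  calc lipNorm (fun x => blend g u F x - F x) ≤ ε / 2 + ε / 4 :=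
        lipNorm_blend_sub_le hLg hLF hu (by linarith) (by positivity)
          fun v hv => huF v (subset_closure hv)
    _ < ε := by linarith

/-- If `(M, ℝ)` has the Lip-BPB property and `K` is a compact Hausdorff space, then
`(M, C(K, ℝ))` has the Lip-BPB property for Lipschitz compact maps. -/
theorem lipBPBCompact_continuousMap_real {M : Type*} [MetricSpace M] [CompleteSpace M]
    (z : M) (hM : LipBPB M z ℝ)
    (K : Type*) [TopologicalSpace K] [CompactSpace K] [T2Space K] :
    LipBPBCompact M z C(K, ℝ) :=
  lipBPBCompact_continuousMap_real_general z hM K
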